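/- For each k ≥ 0 and n ≥ 1, the element c_{k,n} := Σ_{i=1}^n (i, i+1, …, n)·J_{n-1}^k·(n, n-1, …, i) lies in the center of the group algebra k[S_n], where J_{n-1} = Σ_{j=1}^{n-1} (j, n). -/

import Mathlib

/-!
Conjugation by `g ∈ S_n` permutes the summands of `c_{k,n}`: if `σ_j` is the representative
sending `n` to `j`, then `σ_{g j}⁻¹ g σ_j` fixes `n`, and `J_{n-1}`, being the sum of all
transpositions `(x, n)` (minus the identity), commutes with the stabilizer of `n`. So `c_{k,n}`
commutes with every group element, and these span `k[S_n]`.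
-/

open Equiv MonoidAlgebra

/-- The adjacent transposition swapping the 0-indexed points `j` and `j+1` of
`Fin (N+1)` (and `1` if out of range). -/
noncomputable def adjT (N j : ℕ) : Perm (Fin (N + 1)) :=
  if h : j + 1 < N + 1 then Equiv.swap ⟨j, by omega⟩ ⟨j + 1, h⟩ else 1

/-- The cycle `(i, i+1, …, n)` of `S_n` in 1-indexed notation (`n = N+1`,
`i = j+1`): the product `t_j t_{j+1} ⋯ t_{N-1}` of adjacent transpositions,
which sends `j ↦ j+1 ↦ ⋯ ↦ N ↦ j` (0-indexed). -/
noncomputable def cyc (N j : ℕ) : Perm (Fin (N + 1)) :=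
  ((List.range (N - j)).map fun m => adjT N (j + m)).prod

/-- The Jucys–Murphy element `J_{n-1} = ∑_{j=1}^{n-1} (j, n)` of `k[S_n]`
(`n = N+1`). -/
noncomputable def jmLast (k : Type) [CommRing k] (N : ℕ) :
    MonoidAlgebra k (Perm (Fin (N + 1))) :=
  ∑ j : Fin N, MonoidAlgebra.of k (Perm (Fin (N + 1)))
    (Equiv.swap j.castSucc (Fin.last N))

/-- The element `c_{k,n} = ∑_{i=1}^{n} (i,…,n) · J_{n-1}ᵏ · (n,…,i)` of
`k[S_n]` (`n = N+1`), the sum over the coset representatives `(i,…,n)` of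
`S_{n-1} ⊂ S_n` of the conjugates of the `k`-th power of `J_{n-1}`. -/
noncomputable def cElt (k : Type) [CommRing k] (N kk : ℕ) :
    MonoidAlgebra k (Perm (Fin (N + 1))) :=
  ∑ j : Fin (N + 1),
    MonoidAlgebra.of k (Perm (Fin (N + 1))) (cyc N j) * jmLast k N ^ kk *
      MonoidAlgebra.of k (Perm (Fin (N + 1))) (cyc N j)⁻¹

namespace MonoidAlgebra

variable {k G : Type*}

theorem commute_of_forall_commute_of [CommSemiring k] [Monoid G] {c : MonoidAlgebra k G}
    (hc : ∀ g, Commute (of k G g) c) (x : MonoidAlgebra k G) : Commute x c := by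
  induction x using MonoidAlgebra.induction_on with
  | of g => exact hc g
  | add x y hx hy => exact hx.add_left hy
  | smul r x hx => exact hx.smul_left r

theorem commute_of_sum_conj [Semiring k] [Group G] {X : Type*} [MulAction G X] [Fintype X]
    {x₀ : X} {s : X → G} (hs : ∀ x, s x • x₀ = x) {a : MonoidAlgebra k G}
    (ha : ∀ h : G, h • x₀ = x₀ → Commute (of k G h) a) (g : G) :
    Commute (of k G g) (∑ x, of k G (s x) * a * of k G (s x)⁻¹) := by
  have key : ∀ x, of k G g * (of k G (s x) * a * of k G (s x)⁻¹) =
      of k G (s (g • x)) * a * of k G (s (g • x))⁻¹ * of k G g := by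
    intro x
    -- `h` fixes `x₀`, so it commutes with `a` and turns the `x`-summand into the `(g • x)`-summand.
    set h := (s (g • x))⁻¹ * g * s x
    have hh : h • x₀ = x₀ := by
      simp only [h, mul_smul, hs, inv_smul_eq_iff]
    have e1 : g * s x = s (g • x) * h := by simp only [h]; group
    have e2 : h * (s x)⁻¹ = (s (g • x))⁻¹ * g := by simp only [h]; group
    calc of k G g * (of k G (s x) * a * of k G (s x)⁻¹)
        = of k G (s (g • x)) * (of k G h * a) * of k G (s x)⁻¹ := by
          simp only [← mul_assoc, ← map_mul, e1]
      _ = of k G (s (g • x)) * (a * of k G h) * of k G (s x)⁻¹ := by rw [(ha h hh).eq]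
      _ = _ := by simp only [mul_assoc, ← map_mul, e2]
  rw [Commute, SemiconjBy, Finset.mul_sum, Finset.sum_mul]
  simp only [key]
  exact Equiv.sum_comp (MulAction.toPerm g) fun x => of k G (s x) * a * of k G (s x)⁻¹ * of k G g

end MonoidAlgebra

theorem Equiv.Perm.commute_of_sum_swap {k α : Type*} [Semiring k] [Fintype α] [DecidableEq α]
    {a : α} {h : Perm α} (ha : h a = a) :
    Commute (of k (Perm α) h) (∑ x, of k (Perm α) (swap x a)) := by
  have key : ∀ x, of k (Perm α) h * of k (Perm α) (swap x a) =
      of k (Perm α) (swap (h x) a) * of k (Perm α) h := by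
    intro x
    rw [← map_mul, ← map_mul, ← ha, swap_apply_apply, ha, inv_mul_cancel_right]
  rw [Commute, SemiconjBy, Finset.mul_sum, Finset.sum_mul]
  simp only [key]
  exact Equiv.sum_comp h fun x => of k (Perm α) (swap x a) * _

theorem jmLast_eq_sum_sub_one (k : Type) [CommRing k] (N : ℕ) :
    jmLast k N = ∑ x, of k (Perm (Fin (N + 1))) (swap x (Fin.last N)) - 1 := by
  rw [Fin.sum_univ_castSucc, swap_self, ← Perm.one_def, map_one, add_sub_cancel_right, jmLast]

theorem cyc_self (N : ℕ) : cyc N N = 1 := by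
  simp [cyc]

theorem cyc_eq_adjT_mul {N j : ℕ} (hj : j < N) : cyc N j = adjT N j * cyc N (j + 1) := by
  rw [cyc, cyc, show N - j = N - (j + 1) + 1 by omega, List.range_succ_eq_map]
  simp [Function.comp_def, add_assoc, add_comm 1]

theorem cyc_apply_last {N j : ℕ} (hj : j ≤ N) : cyc N j (Fin.last N) = ⟨j, by omega⟩ := by
  induction h : N - j generalizing j with
  | zero =>
    obtain rfl : j = N := by omega
    rw [cyc_self]; rfl
  | succ d ih =>
    rw [cyc_eq_adjT_mul (by omega), Perm.mul_apply, ih (by omega) (by omega), adjT,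
      dif_pos (by omega), swap_apply_right]

/-- For each `kk ≥ 0` and `n = N+1 ≥ 1`, the element
`c_{kk,n} = ∑_{i=1}^{n} (i,…,n) · J_{n-1}^{kk} · (n,…,i)` lies in the center of
the group algebra `k[S_n]`. -/
theorem cElt_central (k : Type) [CommRing k] (N kk : ℕ)
    (x : MonoidAlgebra k (Perm (Fin (N + 1)))) :
    cElt k N kk * x = x * cElt k N kk := by
  have hJ : ∀ h : Perm (Fin (N + 1)), h • Fin.last N = Fin.last N →
      Commute (of k _ h) (jmLast k N ^ kk) := fun h hh => by
    rw [jmLast_eq_sum_sub_one]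
    exact ((Perm.commute_of_sum_swap hh).sub_right (Commute.one_right _)).pow_right kk
  have hc : ∀ g, Commute (of k _ g) (cElt k N kk) :=
    MonoidAlgebra.commute_of_sum_conj (fun j => cyc_apply_last j.is_le) hJ
  exact (MonoidAlgebra.commute_of_forall_commute_of hc x).eq.symm
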